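/- arXiv:1003.3605 — 2 statements merged into one kernel-verified Lean document; each statement's English description precedes it below -/
import Mathlib

section
/- Let (V^{•,•}, ∂, ∂̄) be a double complex of complex vector spaces satisfying the (∂∂̄)-property. Fix integers l ≥ 1 and k, and let α ∈ V^{l,k−l} and β, β' ∈ V^{l−1,k−l} be such that ∂̄β' − ∂̄β lies in the image of ∂ : V^{l−2,k−l+1} → V^{l−1,k−l+1}. If α − ∂β' lies in the image of ∂̄ : V^{l,k−l−1} → V^{l,k−l}, then α − ∂β also lies in the image of ∂̄ : V^{l,k−l−1} → V^{l,k−l}. (In particular this applies when ∂̄β' = ∂̄β, i.e. when β and β' solve the same ∂̄-equation.) -/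
/-!
Abstract framework: a double complex of complex vector spaces `V p q` (`p q : ℤ`),
with `V p q = 0` for `p < 0` or `q < 0`, differentials
`∂ = D : V p q → V (p+1) q`, `∂̄ = Db : V p q → V p (q+1)` satisfying
`∂∂ = 0`, `∂̄∂̄ = 0`, `∂∂̄ + ∂̄∂ = 0`.
-/

/-- Transport an element of a doubly-indexed family of vector spaces along
equalities of the indices. -/
def DCcast (V : ℤ → ℤ → Type) {p q : ℤ} (p' q' : ℤ) (hp : p = p') (hq : q = q')
    (x : V p q) : V p' q' :=
  cast (congrArg₂ V hp hq) x

/-- The total differential of a total-degree-`k` element, as a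
total-degree-`k'` element (`k' = k + 1`):
`(dx)^{l, k+1-l} = ∂ x^{l-1, k+1-l} + ∂̄ x^{l, k-l}`. -/
def DCd (V : ℤ → ℤ → Type) [∀ p q, AddCommGroup (V p q)] [∀ p q, Module ℂ (V p q)]
    (D : ∀ p q : ℤ, V p q →ₗ[ℂ] V (p + 1) q) (Db : ∀ p q : ℤ, V p q →ₗ[ℂ] V p (q + 1))
    (k k' : ℤ) (hk : k + 1 = k') (x : ∀ l : ℤ, V l (k - l)) : ∀ l : ℤ, V l (k' - l) :=
  fun l =>
    DCcast V l (k' - l) (by omega) (by omega) (D (l - 1) (k - (l - 1)) (x (l - 1))) +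
    DCcast V l (k' - l) (by omega) (by omega) (Db l (k - l) (x l))

/-- A pure-type element of `V p q`, viewed as a total-degree-`k` element
(`k = p + q`) whose other components vanish. -/
def DCpure (V : ℤ → ℤ → Type) [∀ p q, AddCommGroup (V p q)]
    (p q k : ℤ) (hk : p + q = k) (z : V p q) : ∀ l : ℤ, V l (k - l) :=
  fun l => if h : l = p then DCcast V l (k - l) (by omega) (by omega) z else 0

/-- A total-degree-`k` element is real (w.r.t. a real structure `c`) if
`c (x^{l, k-l}) = x^{k-l, l}` for all `l`. -/
def DCreal (V : ℤ → ℤ → Type) (c : ∀ p q : ℤ, V p q → V q p) (k : ℤ)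
    (x : ∀ l : ℤ, V l (k - l)) : Prop :=
  ∀ l : ℤ, c l (k - l) (x l) = DCcast V (k - l) l (by omega) (by omega) (x (k - l))

/-!
Put `b = β' - β`. The element `∂b` is `∂`-exact, hence `∂`-closed, and it is `∂̄`-closed because
`∂̄b = ∂y` gives `∂̄∂b = -∂∂̄b = -∂∂y = 0`. The `∂∂̄`-property makes it `∂̄`-exact, and
`α - ∂β = (α - ∂β') + ∂b`.
-/

theorem DCcast_add {V : ℤ → ℤ → Type} [∀ p q, AddCommGroup (V p q)]
    {p q : ℤ} (p' q' : ℤ) (hp : p = p') (hq : q = q') (x y : V p q) :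
    DCcast V p' q' hp hq (x + y) = DCcast V p' q' hp hq x + DCcast V p' q' hp hq y := by
  subst hp hq; rfl

theorem DCcast_sub {V : ℤ → ℤ → Type} [∀ p q, AddCommGroup (V p q)]
    {p q : ℤ} (p' q' : ℤ) (hp : p = p') (hq : q = q') (x y : V p q) :
    DCcast V p' q' hp hq (x - y) = DCcast V p' q' hp hq x - DCcast V p' q' hp hq y := by
  subst hp hq; rfl

theorem DCcast_zero {V : ℤ → ℤ → Type} [∀ p q, AddCommGroup (V p q)]
    {p q : ℤ} (p' q' : ℤ) (hp : p = p') (hq : q = q') :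
    DCcast V p' q' hp hq (0 : V p q) = 0 := by
  subst hp hq; rfl

section DoubleComplex

variable {V : ℤ → ℤ → Type} [∀ p q, AddCommGroup (V p q)] [∀ p q, Module ℂ (V p q)]
  (D : ∀ p q : ℤ, V p q →ₗ[ℂ] V (p + 1) q) (Db : ∀ p q : ℤ, V p q →ₗ[ℂ] V p (q + 1))

theorem DCcast_D {p q p' q' : ℤ} (hp : p = p') (hq : q = q') (hp1 : p + 1 = p' + 1)
    (x : V p q) :
    D p' q' (DCcast V p' q' hp hq x) = DCcast V (p' + 1) q' hp1 hq (D p q x) := by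
  subst hp hq; rfl

theorem DCcast_Db {p q p' q' : ℤ} (hp : p = p') (hq : q = q') (hq1 : q + 1 = q' + 1)
    (x : V p q) :
    Db p' q' (DCcast V p' q' hp hq x) = DCcast V p' (q' + 1) hp hq1 (Db p q x) := by
  subst hp hq; rfl

theorem Db_D_eq_zero_of_Db_eq_D
    (hDD : ∀ (p q : ℤ) (x : V p q), D (p + 1) q (D p q x) = 0)
    (hanti : ∀ (p q : ℤ) (x : V p q), D p (q + 1) (Db p q x) + Db (p + 1) q (D p q x) = 0)
    {p p' q : ℤ} (hp : p' + 1 = p) (b : V p q) (y : V p' (q + 1))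
    (hy : DCcast V p (q + 1) hp rfl (D p' (q + 1) y) = Db p q b) :
    Db (p + 1) q (D p q b) = 0 := by
  rw [eq_neg_of_add_eq_zero_right (hanti p q b), ← hy, DCcast_D D hp rfl (by omega), hDD,
    DCcast_zero, neg_zero]

theorem D_mem_range_Db_of_Db_mem_range_D
    (hDD : ∀ (p q : ℤ) (x : V p q), D (p + 1) q (D p q x) = 0)
    (hanti : ∀ (p q : ℤ) (x : V p q), D p (q + 1) (Db p q x) + Db (p + 1) q (D p q x) = 0)
    (hlem : ∀ (p q : ℤ) (x : V p q), D p q x = 0 → Db p q x = 0 →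
      (∃ y : V (p - 1) q, DCcast V p q (sub_add_cancel p 1) rfl (D (p - 1) q y) = x) →
      (∃ z : V p (q - 1), DCcast V p q rfl (sub_add_cancel q 1) (Db p (q - 1) z) = x))
    {p p' q : ℤ} (hp : p' + 1 = p - 1) (b : V (p - 1) q) (y : V p' (q + 1))
    (hy : DCcast V (p - 1) (q + 1) hp rfl (D p' (q + 1) y) = Db (p - 1) q b) :
    ∃ w : V p (q - 1), DCcast V p q rfl (sub_add_cancel q 1) (Db p (q - 1) w) =
      DCcast V p q (sub_add_cancel p 1) rfl (D (p - 1) q b) := by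
  refine hlem p q _ ?_ ?_ ⟨b, rfl⟩
  · rw [DCcast_D D (sub_add_cancel p 1) rfl (by omega), hDD, DCcast_zero]
  · rw [DCcast_Db Db (sub_add_cancel p 1) rfl rfl,
      Db_D_eq_zero_of_Db_eq_D D Db hDD hanti hp b y hy, DCcast_zero]

end DoubleComplex

/-- In a double complex `(V^{•,•}, ∂, ∂̄)` of complex vector spaces
satisfying the `∂∂̄`-property, fix integers `l ≥ 1` and `k`, and let
`α ∈ V^{l, k-l}`, `β, β' ∈ V^{l-1, k-l}` be such that `∂̄β' - ∂̄β` lies in the image of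
`∂ : V^{l-2, k-l+1} → V^{l-1, k-l+1}`. If `α - ∂β'` lies in the image of
`∂̄ : V^{l, k-l-1} → V^{l, k-l}`, then so does `α - ∂β`. -/
theorem statement0
    (V : ℤ → ℤ → Type) [∀ p q, AddCommGroup (V p q)] [∀ p q, Module ℂ (V p q)]
    (D : ∀ p q : ℤ, V p q →ₗ[ℂ] V (p + 1) q)
    (Db : ∀ p q : ℤ, V p q →ₗ[ℂ] V p (q + 1))
    -- `∂∂ = 0`, `∂̄∂̄ = 0`, `∂∂̄ + ∂̄∂ = 0`
    (hDD : ∀ (p q : ℤ) (x : V p q), D (p + 1) q (D p q x) = 0)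
    (hanti : ∀ (p q : ℤ) (x : V p q), D p (q + 1) (Db p q x) + Db (p + 1) q (D p q x) = 0)
    -- the `∂∂̄`-property
    (hlem : ∀ (p q : ℤ) (x : V p q), D p q x = 0 → Db p q x = 0 →
      (∃ y : V (p - 1) q, DCcast V p q (by omega) rfl (D (p - 1) q y) = x) →
      (∃ z : V p (q - 1), DCcast V p q rfl (by omega) (Db p (q - 1) z) = x))
    -- the data
    (l k : ℤ)
    (α : V l (k - l)) (β β' : V (l - 1) (k - l))
    -- `∂̄β' - ∂̄β ∈ im (∂ : V^{l-2, k-l+1} → V^{l-1, k-l+1})`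
    (hββ' : ∃ y : V (l - 2) (k - l + 1),
      DCcast V (l - 1) (k - l + 1) (by omega) rfl (D (l - 2) (k - l + 1) y) =
        Db (l - 1) (k - l) β' - Db (l - 1) (k - l) β)
    -- `α - ∂β' ∈ im (∂̄ : V^{l, k-l-1} → V^{l, k-l})`
    (hβ' : ∃ z : V l (k - l - 1),
      DCcast V l (k - l) rfl (by omega) (Db l (k - l - 1) z) =
        α - DCcast V l (k - l) (by omega) rfl (D (l - 1) (k - l) β')) :
    -- then `α - ∂β ∈ im (∂̄ : V^{l, k-l-1} → V^{l, k-l})`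
    ∃ z : V l (k - l - 1),
      DCcast V l (k - l) rfl (by omega) (Db l (k - l - 1) z) =
        α - DCcast V l (k - l) (by omega) rfl (D (l - 1) (k - l) β) := by
  obtain ⟨y, hy⟩ := hββ'
  obtain ⟨z, hz⟩ := hβ'
  rw [← map_sub] at hy
  obtain ⟨w, hw⟩ := D_mem_range_Db_of_Db_mem_range_D D Db hDD hanti hlem _ (β' - β) y hy
  refine ⟨z + w, ?_⟩
  rw [map_add, DCcast_add, hz, hw, map_sub, DCcast_sub]
  abel
end

section
/- Let (V^{•,•}, ∂, ∂̄) be a double complex of complex vector spaces with a real structure c. Fix an integer p ≥ 1 and let α be a real d-closed total-degree-2p element with components α^{l,2p−l}. Suppose elements β^{l,2p−1−l} ∈ V^{l,2p−1−l} for l = 0, …, p−1 satisfy ∂̄β^{0,2p−1} = α^{0,2p} and α^{l,2p−l} − ∂β^{l−1,2p−l} = ∂̄β^{l,2p−1−l} for l = 1, …, p−1. Define β^{p+s,p−s−1} := c(β^{p−s−1,p+s}) for s = 0, …, p−1, and let β be the total-degree-(2p−1) element with components β^{l,2p−1−l}, l = 0, …, 2p−1. Then β is real, and every bidegree component of α −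 dβ vanishes except possibly the component of bidegree (p,p); i.e. α − dβ is a pure-type element of V^{p,p}. -/
/-- In a double complex with a real structure `c`, let `α` be a real
`d`-closed total-degree-`2p` element and suppose `β^{l,2p-1-l}` (`l = 0, …, p-1`) satisfy
`∂̄β^{0,2p-1} = α^{0,2p}` and `α^{l,2p-l} - ∂β^{l-1,2p-l} = ∂̄β^{l,2p-1-l}` for
`l = 1, …, p-1`, and define `β^{p+s,p-s-1} := c(β^{p-s-1,p+s})` for `s = 0, …, p-1`.
Then the total-degree-`(2p-1)` element `β` is real, and every bidegree component of
`α - dβ` vanishes except possibly the one of bidegree `(p,p)`. -/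
theorem statement2
    (V : ℤ → ℤ → Type) [∀ p q, AddCommGroup (V p q)] [∀ p q, Module ℂ (V p q)]
    (D : ∀ p q : ℤ, V p q →ₗ[ℂ] V (p + 1) q)
    (Db : ∀ p q : ℤ, V p q →ₗ[ℂ] V p (q + 1))
    (hzero : ∀ p q : ℤ, (p < 0 ∨ q < 0) → ∀ x : V p q, x = 0)
    (hDD : ∀ (p q : ℤ) (x : V p q), D (p + 1) q (D p q x) = 0)
    (hDbDb : ∀ (p q : ℤ) (x : V p q), Db p (q + 1) (Db p q x) = 0)
    (hanti : ∀ (p q : ℤ) (x : V p q), D p (q + 1) (Db p q x) + Db (p + 1) q (D p q x) = 0)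
    -- a real structure: a family of conjugate-linear involutions compatible with `∂, ∂̄`
    (c : ∀ p q : ℤ, V p q → V q p)
    (hc_add : ∀ (p q : ℤ) (x y : V p q), c p q (x + y) = c p q x + c p q y)
    (hc_smul : ∀ (p q : ℤ) (a : ℂ) (x : V p q),
      c p q (a • x) = (starRingEnd ℂ) a • c p q x)
    (hcc : ∀ (p q : ℤ) (x : V p q), c q p (c p q x) = x)
    (hcD : ∀ (p q : ℤ) (x : V p q), c (p + 1) q (D p q x) = Db q p (c p q x))
    -- the data
    (p : ℤ) (hp : 1 ≤ p)
    (α : ∀ l : ℤ, V l (2 * p - l))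
    -- `α` is real and `d`-closed
    (hαreal : DCreal V c (2 * p) α)
    (hαclosed : ∀ l : ℤ, DCd V D Db (2 * p) (2 * p + 1) (by omega) α l = 0)
    (B : ∀ j : ℤ, V j (2 * p - 1 - j))
    -- `∂̄β^{0,2p-1} = α^{0,2p}`
    (hB0 : DCcast V 0 (2 * p - 0) rfl (by omega) (Db 0 (2 * p - 1 - 0) (B 0)) = α 0)
    -- `α^{l,2p-l} - ∂β^{l-1,2p-l} = ∂̄β^{l,2p-1-l}` for `l = 1, …, p-1`
    (hBl : ∀ l : ℤ, 1 ≤ l → l ≤ p - 1 →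
      α l - DCcast V l (2 * p - l) (by omega) (by omega)
          (D (l - 1) (2 * p - 1 - (l - 1)) (B (l - 1))) =
        DCcast V l (2 * p - l) rfl (by omega) (Db l (2 * p - 1 - l) (B l)))
    -- `β^{p+s,p-s-1} := c(β^{p-s-1,p+s})` for `s = 0, …, p-1`
    (hBconj : ∀ s : ℤ, 0 ≤ s → s ≤ p - 1 →
      B (p + s) = DCcast V (p + s) (2 * p - 1 - (p + s)) (by omega) (by omega)
        (c (p - s - 1) (2 * p - 1 - (p - s - 1)) (B (p - s - 1)))) :
    -- then `β` is real and `α - dβ` is a pure-type element of `V^{p,p}`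
    DCreal V c (2 * p - 1) B ∧
      ∀ l : ℤ, l ≠ p → α l - DCd V D Db (2 * p - 1) (2 * p) (by omega) B l = 0 := by
  
  -- cast toolkit
  have cast_heq : ∀ {a b a' b' : ℤ} (hp : a = a') (hq : b = b') (x : V a b),
      HEq (DCcast V a' b' hp hq x) x := by
    intro a b a' b' hp hq x; subst hp; subst hq; exact HEq.rfl
  have heq_eq : ∀ {a b a' b' : ℤ} (hp : a = a') (hq : b = b') (x : V a b) (y : V a' b'),
      HEq x y → DCcast V a' b' hp hq x = y := by
    intro a b a' b' hp hq x y h; subst hp; subst hq; exact eq_of_heq h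
  have cast_zero : ∀ {a b a' b' : ℤ} (hp : a = a') (hq : b = b'),
      DCcast V a' b' hp hq (0 : V a b) = 0 := by
    intro a b a' b' hp hq; subst hp; subst hq; rfl
  have cast_add : ∀ {a b a' b' : ℤ} (hp : a = a') (hq : b = b') (x y : V a b),
      DCcast V a' b' hp hq (x + y) = DCcast V a' b' hp hq x + DCcast V a' b' hp hq y := by
    intro a b a' b' hp hq x y; subst hp; subst hq; rfl
  have cast_cast : ∀ {a b a' b' a'' b'' : ℤ} (hp : a = a') (hq : b = b')
      (hp' : a' = a'') (hq' : b' = b'') (x : V a b),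
      DCcast V a'' b'' hp' hq' (DCcast V a' b' hp hq x)
        = DCcast V a'' b'' (hp.trans hp') (hq.trans hq') x := by
    intro a b a' b' a'' b'' hp hq hp' hq' x
    subst hp; subst hq; subst hp'; subst hq'; rfl
  have B_heq : ∀ {j j' : ℤ}, j = j' → HEq (B j) (B j') := by
    intro j j' h; subst h; exact HEq.rfl
  have c_heq : ∀ {a b a' b' : ℤ} (hp : a = a') (hq : b = b') {x : V a b} {y : V a' b'},
      HEq x y → HEq (c a b x) (c a' b' y) := by
    intro a b a' b' hp hq x y h; subst hp; subst hq
    exact heq_of_eq (congrArg (c a b) (eq_of_heq h))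
  have D_heq : ∀ {a b a' b' : ℤ} (hp : a = a') (hq : b = b') {x : V a b} {y : V a' b'},
      HEq x y → HEq (D a b x) (D a' b' y) := by
    intro a b a' b' hp hq x y h; subst hp; subst hq
    exact heq_of_eq (congrArg (fun z => D a b z) (eq_of_heq h))
  have Db_heq : ∀ {a b a' b' : ℤ} (hp : a = a') (hq : b = b') {x : V a b} {y : V a' b'},
      HEq x y → HEq (Db a b x) (Db a' b' y) := by
    intro a b a' b' hp hq x y h; subst hp; subst hq
    exact heq_of_eq (congrArg (fun z => Db a b z) (eq_of_heq h))
  have pf0 : 2 * p - 1 + 1 = 2 * p := by omega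
  -- conjugation basics
  have c_zero : ∀ (a b : ℤ), c a b (0 : V a b) = 0 := by
    intro a b; simpa using hc_smul a b 0 0
  have c_neg : ∀ (a b : ℤ) (x : V a b), c a b (-x) = -(c a b x) := by
    intro a b x; simpa using hc_smul a b (-1) x
  have c_sub : ∀ (a b : ℤ) (x y : V a b), c a b (x - y) = c a b x - c a b y := by
    intro a b x y
    rw [sub_eq_add_neg, hc_add, c_neg, ← sub_eq_add_neg]
  have cDb : ∀ (a b : ℤ) (x : V a b), c a (b + 1) (Db a b x) = D b a (c a b x) := by
    intro a b x
    have h := hcD b a (c a b x)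
    rw [hcc] at h
    calc c a (b + 1) (Db a b x)
        = c a (b + 1) (c (b + 1) a (D b a (c a b x))) := by rw [h]
      _ = D b a (c a b x) := hcc _ _ _
  -- reality of B
  have key : ∀ l : ℤ, 0 ≤ l → l ≤ p - 1 →
      HEq (B (2 * p - 1 - l)) (c l (2 * p - 1 - l) (B l)) := by
    intro l h0 h1
    have hb := hBconj (p - 1 - l) (by omega) (by omega)
    exact ((B_heq (by omega : 2 * p - 1 - l = p + (p - 1 - l))).trans
      (heq_of_eq hb)).trans
      ((cast_heq _ _ _).trans (c_heq (by omega) (by omega) (B_heq (by omega))))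
  have Breal : DCreal V c (2 * p - 1) B := by
    intro l
    by_cases h0 : l < 0
    · rw [hzero l (2 * p - 1 - l) (Or.inl h0) (B l), c_zero,
        hzero (2 * p - 1 - l) (2 * p - 1 - (2 * p - 1 - l)) (Or.inr (by omega))
          (B (2 * p - 1 - l)), cast_zero]
    by_cases h2 : 2 * p - 1 - l < 0
    · rw [hzero l (2 * p - 1 - l) (Or.inr h2) (B l), c_zero,
        hzero (2 * p - 1 - l) (2 * p - 1 - (2 * p - 1 - l)) (Or.inl (by omega))
          (B (2 * p - 1 - l)), cast_zero]
    by_cases h3 : l ≤ p - 1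
    · exact (heq_eq _ _ _ _ (key l (by omega) h3)).symm
    · have h1 : HEq (B l) (c (2 * p - 1 - l) (2 * p - 1 - (2 * p - 1 - l)) (B (2 * p - 1 - l))) :=
        (B_heq (by omega : l = 2 * p - 1 - (2 * p - 1 - l))).trans
          (key (2 * p - 1 - l) (by omega) (by omega))
      have h2' := c_heq (by omega : l = 2 * p - 1 - (2 * p - 1 - l)) rfl h1
      rw [hcc] at h2'
      exact (heq_eq _ _ _ _ h2'.symm).symm
  -- the components of bidegree (l, 2p-l) with l ≤ p-1 vanish
  have main_low : ∀ l : ℤ, l ≤ p - 1 →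
      α l - DCd V D Db (2 * p - 1) (2 * p) pf0 B l = 0 := by
    intro l hl
    rcases lt_trichotomy l 0 with h0 | h0 | h0
    · exact hzero l (2 * p - l) (Or.inl h0) _
    · subst h0
      simp only [DCd]
      rw [hzero (0 - 1) (2 * p - 1 - (0 - 1)) (Or.inl (by omega)) (B (0 - 1)),
        map_zero, cast_zero, zero_add, sub_eq_zero]
      exact hB0.symm
    · simp only [DCd]
      rw [sub_add_eq_sub_sub, sub_eq_zero]
      exact hBl l (by omega) hl
  -- dβ is real
  have cdB : ∀ l : ℤ, c l (2 * p - l) (DCd V D Db (2 * p - 1) (2 * p) pf0 B l) =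
      DCcast V (2 * p - l) l (by omega) (by omega)
        (DCd V D Db (2 * p - 1) (2 * p) pf0 B (2 * p - l)) := by
    intro l
    have claimB : c l (2 * p - l)
        (DCcast V l (2 * p - l) (by omega) (by omega)
          (D (l - 1) (2 * p - 1 - (l - 1)) (B (l - 1)))) =
        DCcast V (2 * p - l) l rfl (by omega)
          (Db (2 * p - l) (2 * p - 1 - (2 * p - l)) (B (2 * p - l))) := by
      have inner : HEq (c (l - 1) (2 * p - 1 - (l - 1)) (B (l - 1))) (B (2 * p - l)) :=
        (heq_of_eq (Breal (l - 1))).trans ((cast_heq _ _ _).trans (B_heq (by omega)))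
      have chain : HEq (c l (2 * p - l)
          (DCcast V l (2 * p - l) (by omega) (by omega)
            (D (l - 1) (2 * p - 1 - (l - 1)) (B (l - 1)))))
          (Db (2 * p - l) (2 * p - 1 - (2 * p - l)) (B (2 * p - l))) :=
        ((c_heq (by omega) (by omega) (cast_heq _ _ _)).trans
          (heq_of_eq (hcD (l - 1) (2 * p - 1 - (l - 1)) (B (l - 1))))).trans
          (Db_heq (by omega) (by omega) inner)
      exact (heq_eq rfl (by omega) _ _ chain.symm).symm
    have claimA : c l (2 * p - l)
        (DCcast V l (2 * p - l) (by omega) (by omega)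
          (Db l (2 * p - 1 - l) (B l))) =
        DCcast V (2 * p - l) l (by omega) (by omega)
          (D (2 * p - l - 1) (2 * p - 1 - (2 * p - l - 1)) (B (2 * p - l - 1))) := by
      have inner : HEq (c l (2 * p - 1 - l) (B l)) (B (2 * p - l - 1)) :=
        (heq_of_eq (Breal l)).trans ((cast_heq _ _ _).trans (B_heq (by omega)))
      have chain : HEq (c l (2 * p - l)
          (DCcast V l (2 * p - l) (by omega) (by omega)
            (Db l (2 * p - 1 - l) (B l))))
          (D (2 * p - l - 1) (2 * p - 1 - (2 * p - l - 1)) (B (2 * p - l - 1))) :=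
        ((c_heq rfl (by omega) (cast_heq _ _ _)).trans
          (heq_of_eq (cDb l (2 * p - 1 - l) (B l)))).trans
          (D_heq (by omega) (by omega) inner)
      exact (heq_eq (by omega) (by omega) _ _ chain.symm).symm
    simp only [DCd]
    rw [hc_add, cast_add, cast_cast, cast_cast]
    exact (congrArg₂ (· + ·) claimB claimA).trans (add_comm _ _)
  refine ⟨Breal, ?_⟩
  intro l hl
  rcases le_or_gt l (p - 1) with h | h
  · exact main_low l h
  · have hx : c l (2 * p - l) (α l - DCd V D Db (2 * p - 1) (2 * p) pf0 B l) = 0 := by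
      rw [c_sub, hαreal l, cdB l, sub_eq_zero]
      have h0 := main_low (2 * p - l) (by omega)
      rw [sub_eq_zero] at h0
      exact congrArg (DCcast V (2 * p - l) l (by omega) (by omega)) h0
    have hy := hcc l (2 * p - l) (α l - DCd V D Db (2 * p - 1) (2 * p) pf0 B l)
    rw [hx, c_zero] at hy
    exact hy.symm
end
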